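/- Let V be a vector space of dimension r+1 over an infinite field, equipped with two decreasing chains of subspaces V = W_0 ⊇ ⋯ ⊇ W_{d+1} = {0} and V = U_0 ⊇ ⋯ ⊇ U_{d+1} = {0}, each with one-step dimension drops at most 1. Let a_0 < a_1 < ⋯ < a_r be the orders attained with respect to (W_i) and b_0 < ⋯ < b_r the orders attained with respect to (U_i). Then there exist a basis s_0, …, s_r of V and a permutation σ of {0, …, r} such that ord_W(s_i) = a_i and ord_U(s_i) = b_{σ(i)} for all i. -/

import Mathlib

/-!
Induct on the dimension. Let `H = W (p + 1)` be the first proper member of the chain `W`; it is a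
hyperplane because drops are at most one. Intersecting both chains with `H` keeps the drops at
most one, so by induction `H` carries a linearly independent family whose orders with respect to
`W ⊓ H` and `U ⊓ H` (which are its orders for `W` and `U`) are pairwise distinct. Adjoin a
vector `s₀ ∈ U t` outside `H`, where `t` is the last index with `U t ⊄ H`: its `W`-order `p`
is new, and so is its `U`-order `t`, because `U t ⊓ H = U (t + 1)` by a dimension count.
A family of `r + 1` vectors with pairwise distinct attained orders realises every attained
order exactly once, which gives the indexing by `a` and the permutation `σ`.
-/

open Module Function

section Chains

variable {k V : Type*} [Field k] [AddCommGroup V] [Module k V]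

def HasOrder (F : ℕ → Submodule k V) (s : V) (j : ℕ) : Prop :=
  s ∈ F j ∧ s ∉ F (j + 1)

lemma hasOrder_inf_iff {F : ℕ → Submodule k V} {H : Submodule k V} {s : V} {j : ℕ} :
    HasOrder (fun i => F i ⊓ H) s j ↔ s ∈ H ∧ HasOrder F s j := by
  simp only [HasOrder, Submodule.mem_inf]
  tauto

variable [FiniteDimensional k V]

lemma Submodule.finrank_inf_le_finrank_inf_add_one {A B : Submodule k V} (C : Submodule k V)
    (hBA : B ≤ A) (hdrop : finrank k A ≤ finrank k B + 1) :
    finrank k ↥(A ⊓ C) ≤ finrank k ↥(B ⊓ C) + 1 := by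
  have hmod := Submodule.finrank_sup_add_finrank_inf_eq B (A ⊓ C)
  have hinf : B ⊓ (A ⊓ C) = B ⊓ C := by rw [← inf_assoc, inf_eq_left.mpr hBA]
  have hsup := Submodule.finrank_mono (sup_le hBA inf_le_left : B ⊔ (A ⊓ C) ≤ A)
  rw [hinf] at hmod
  omega

lemma Submodule.inf_eq_of_finrank_le_add_one {A B H : Submodule k V} (hBA : B ≤ A)
    (hdrop : finrank k A ≤ finrank k B + 1) (hBH : B ≤ H) (hAH : ¬ A ≤ H) : A ⊓ H = B := by
  have hlt : finrank k ↥(A ⊓ H) < finrank k A :=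
    Submodule.finrank_lt_finrank_of_lt (inf_le_left.lt_of_ne fun h => hAH (h ▸ inf_le_right))
  exact (Submodule.eq_of_le_of_finrank_le (le_inf hBA hBH) (by omega)).symm

variable {F G : ℕ → Submodule k V} {N : ℕ}

lemma exists_first_drop (hF : Antitone F) (hFN : F N = ⊥)
    (hFdrop : ∀ j, finrank k (F j) ≤ finrank k (F (j + 1)) + 1) {n : ℕ}
    (hn : finrank k (F 0) = n + 1) :
    ∃ p, F p = F 0 ∧ finrank k (F (p + 1)) = n := by
  have hF0 : F N ≠ F 0 := by
    rintro h
    rw [← h, hFN, finrank_bot] at hn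
    omega
  obtain ⟨p, hp, hp1⟩ :=
    Nat.exists_not_and_succ_of_not_zero_of_exists (p := fun j => F j ≠ F 0) (by simp) ⟨N, hF0⟩
  rw [not_not] at hp
  have hlt := Submodule.finrank_lt_finrank_of_lt
    ((hF (by omega : p ≤ p + 1)).lt_of_ne (hp ▸ hp1))
  have := hFdrop p
  rw [hp] at hlt this
  exact ⟨p, hp, by omega⟩

theorem exists_linearIndependent_hasOrder (hF : Antitone F) (hG : Antitone G) (hFG : F 0 = G 0)
    (hFN : F N = ⊥) (hGN : G N = ⊥)
    (hFdrop : ∀ j, finrank k (F j) ≤ finrank k (F (j + 1)) + 1)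
    (hGdrop : ∀ j, finrank k (G j) ≤ finrank k (G (j + 1)) + 1) {n : ℕ}
    (hn : finrank k (F 0) = n) :
    ∃ s : Fin n → V, LinearIndependent k s ∧
      ∃ f g : Fin n → ℕ, Injective f ∧ Injective g ∧
        ∀ i, HasOrder F (s i) (f i) ∧ HasOrder G (s i) (g i) := by
  induction n generalizing F G with
  | zero =>
    exact ⟨Fin.elim0, linearIndependent_empty_type, Fin.elim0, Fin.elim0,
      fun i => i.elim0, fun i => i.elim0, fun i => i.elim0⟩
  | succ n ih =>
    obtain ⟨p, hp, hH⟩ := exists_first_drop hF hFN hFdrop hn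
    set H := F (p + 1)
    obtain ⟨t, hGt, hGt1⟩ := Nat.exists_not_and_succ_of_not_zero_of_exists
      (p := fun j => G j ≤ H)
      (fun h => by have := Submodule.finrank_mono (hFG ▸ h : F 0 ≤ H); omega)
      ⟨N, hGN ▸ bot_le⟩
    obtain ⟨s₀, hs₀G, hs₀H⟩ := SetLike.not_le_iff_exists.mp hGt
    have hGH : G t ⊓ H = G (t + 1) :=
      Submodule.inf_eq_of_finrank_le_add_one (hG (by omega)) (hGdrop t) hGt1 hGt
    have hHF : H ≤ F 0 := hF (Nat.zero_le _)
    obtain ⟨s, hs, f, g, hf, hg, hsF⟩ := ih (F := fun j => F j ⊓ H) (G := fun j => G j ⊓ H)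
      (fun i j hij => inf_le_inf_right H (hF hij)) (fun i j hij => inf_le_inf_right H (hG hij))
      (by rw [hFG]) (by simp [hFN]) (by simp [hGN])
      (fun j => Submodule.finrank_inf_le_finrank_inf_add_one H (hF (by omega)) (hFdrop j))
      (fun j => Submodule.finrank_inf_le_finrank_inf_add_one H (hG (by omega)) (hGdrop j))
      (by rwa [inf_eq_right.mpr hHF])
    simp only [hasOrder_inf_iff] at hsF
    have hsH : ∀ i, s i ∈ H := fun i => (hsF i).1.1
    have hp_notMem : p ∉ Set.range f := by
      rintro ⟨i, rfl⟩
      exact (hsF i).1.2.2 (hsH i)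
    have ht_notMem : t ∉ Set.range g := by
      rintro ⟨i, rfl⟩
      exact (hsF i).2.2.2 (hGH ▸ ⟨(hsF i).2.2.1, hsH i⟩)
    have hs₀F : HasOrder F s₀ p := ⟨hp ▸ hFG ▸ hG (Nat.zero_le t) hs₀G, hs₀H⟩
    refine ⟨Fin.cons s₀ s, linearIndependent_finCons.mpr ⟨hs, fun h => hs₀H ?_⟩,
      Fin.cons p f, Fin.cons t g, Fin.cons_injective_iff.mpr ⟨hp_notMem, hf⟩,
      Fin.cons_injective_iff.mpr ⟨ht_notMem, hg⟩,
      Fin.forall_fin_succ.mpr ⟨⟨hs₀F, hs₀G, fun h => hs₀H (hGt1 h)⟩,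
        fun i => (hsF i).imp And.right And.right⟩⟩
    exact Submodule.span_le.mpr (Set.range_subset_iff.mpr hsH) h

end Chains

/- A chain indexed by `Fin (d + 2)` is read as a chain indexed by `ℕ` through `Fin.clamp`, which
makes it constant from `d + 1` on. -/
section FinChains

variable {k V : Type*} [Field k] [AddCommGroup V] [Module k V] {d : ℕ}
  {W : Fin (d + 2) → Submodule k V}

lemma Antitone.comp_clamp (hW : Antitone W) : Antitone fun j => W (Fin.clamp j (d + 1)) :=
  fun i j hij => hW (by simp only [Fin.le_def, Fin.clamp]; omega)

lemma hasOrder_clamp_iff {s : V} (i : Fin (d + 1)) :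
    HasOrder (fun j => W (Fin.clamp j (d + 1))) s i ↔ s ∈ W i.castSucc ∧ s ∉ W i.succ := by
  have h₀ : Fin.clamp i (d + 1) = i.castSucc := Fin.ext (by simp [Fin.clamp])
  have h₁ : Fin.clamp (i + 1) (d + 1) = i.succ := Fin.ext (by simp [Fin.clamp]; omega)
  simp only [HasOrder, h₀, h₁]

lemma HasOrder.lt_of_clamp {s : V} {j : ℕ} (h : HasOrder (fun j => W (Fin.clamp j (d + 1))) s j) :
    j < d + 1 := by
  by_contra! hj
  have : Fin.clamp (j + 1) (d + 1) = Fin.clamp j (d + 1) := Fin.ext (by simp [Fin.clamp]; omega)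
  exact h.2 (by simpa only [this] using h.1)

lemma finrank_clamp_le_succ_add_one
    (hWdrop : ∀ i : Fin (d + 1), finrank k (W i.castSucc) ≤ finrank k (W i.succ) + 1)
    (j : ℕ) :
    finrank k (W (Fin.clamp j (d + 1))) ≤ finrank k (W (Fin.clamp (j + 1) (d + 1))) + 1 := by
  rcases lt_or_ge j (d + 1) with hj | hj
  · have h₀ : Fin.clamp j (d + 1) = (⟨j, hj⟩ : Fin (d + 1)).castSucc :=
      Fin.ext (by simp [Fin.clamp]; omega)
    have h₁ : Fin.clamp (j + 1) (d + 1) = (⟨j, hj⟩ : Fin (d + 1)).succ :=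
      Fin.ext (by simp [Fin.clamp]; omega)
    rw [h₀, h₁]
    exact hWdrop _
  · have : Fin.clamp (j + 1) (d + 1) = Fin.clamp j (d + 1) := Fin.ext (by simp [Fin.clamp]; omega)
    rw [this]
    omega

lemma exists_perm_of_hasOrder_clamp {ι : Type*} [Finite ι] {a : ι → Fin (d + 1)}
    (haW : {i : Fin (d + 1) | ∃ s : V, s ≠ 0 ∧ s ∈ W i.castSucc ∧ s ∉ W i.succ} =
      Set.range a)
    {s : ι → V} {f : ι → ℕ} (hf : Injective f)
    (hs : ∀ i, HasOrder (fun j => W (Fin.clamp j (d + 1))) (s i) (f i)) :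
    ∃ τ : Equiv.Perm ι, ∀ i, s i ∈ W (a (τ i)).castSucc ∧ s i ∉ W (a (τ i)).succ := by
  have hattained : ∀ i, ∃ i', a i' = ⟨f i, (hs i).lt_of_clamp⟩ := fun i => by
    have := (hasOrder_clamp_iff (W := W) ⟨f i, (hs i).lt_of_clamp⟩).mp (hs i)
    rw [← Set.mem_range, ← haW]
    exact ⟨s i, fun h => this.2 (by simp [h]), this⟩
  choose τ hτ using hattained
  have hτinj : Injective τ := fun i j h => hf (by simpa [hτ] using congrArg a h)
  refine ⟨Equiv.ofBijective τ (Finite.injective_iff_bijective.mp hτinj), fun i => ?_⟩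
  rw [Equiv.ofBijective_apply, hτ, ← hasOrder_clamp_iff]
  exact hs i

end FinChains

theorem stmt_6_general {k V : Type*} [Field k] [AddCommGroup V] [Module k V]
    (r d : ℕ) (hV : Module.finrank k V = r + 1)
    (W U : Fin (d + 2) → Submodule k V)
    (hWmono : Antitone W) (hUmono : Antitone U)
    (hW0 : W 0 = ⊤) (hWlast : W (Fin.last (d + 1)) = ⊥)
    (hU0 : U 0 = ⊤) (hUlast : U (Fin.last (d + 1)) = ⊥)
    (hWdrop : ∀ i : Fin (d + 1),
      Module.finrank k (W i.castSucc) ≤ Module.finrank k (W i.succ) + 1)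
    (hUdrop : ∀ i : Fin (d + 1),
      Module.finrank k (U i.castSucc) ≤ Module.finrank k (U i.succ) + 1)
    (a b : Fin (r + 1) → Fin (d + 1))
    (haW : {i : Fin (d + 1) | ∃ s : V, s ≠ 0 ∧ s ∈ W i.castSucc ∧ s ∉ W i.succ}
      = Set.range a)
    (hbU : {i : Fin (d + 1) | ∃ s : V, s ≠ 0 ∧ s ∈ U i.castSucc ∧ s ∉ U i.succ}
      = Set.range b) :
    ∃ (s : Module.Basis (Fin (r + 1)) k V) (σ : Equiv.Perm (Fin (r + 1))),
      ∀ i : Fin (r + 1),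
        (s i ∈ W (a i).castSucc ∧ s i ∉ W (a i).succ) ∧
        (s i ∈ U (b (σ i)).castSucc ∧ s i ∉ U (b (σ i)).succ) := by
  have : FiniteDimensional k V := Module.finite_of_finrank_pos (by omega)
  have hclamp₀ : Fin.clamp 0 (d + 1) = 0 := rfl
  have hclampLast : Fin.clamp (d + 1) (d + 1) = Fin.last (d + 1) := Fin.ext (by simp [Fin.clamp])
  obtain ⟨s, hs, f, g, hf, hg, hsWU⟩ := exists_linearIndependent_hasOrder (N := d + 1)
    hWmono.comp_clamp hUmono.comp_clamp (by simp only [hclamp₀, hW0, hU0])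
    (by simp only [hclampLast, hWlast]) (by simp only [hclampLast, hUlast])
    (finrank_clamp_le_succ_add_one hWdrop) (finrank_clamp_le_succ_add_one hUdrop)
    (by rw [hclamp₀, hW0, finrank_top, hV])
  obtain ⟨τ, hτ⟩ := exists_perm_of_hasOrder_clamp haW hf fun i => (hsWU i).1
  obtain ⟨ρ, hρ⟩ := exists_perm_of_hasOrder_clamp hbU hg fun i => (hsWU i).2
  refine ⟨basisOfLinearIndependentOfCardEqFinrank (hs.comp τ.symm τ.symm.injective)
    (by rw [Fintype.card_fin, hV]), τ.symm.trans ρ, fun i => ?_⟩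
  rw [coe_basisOfLinearIndependentOfCardEqFinrank]
  simpa using And.intro (hτ (τ.symm i)) (hρ (τ.symm i))

theorem stmt_6 {k V : Type*} [Field k] [Infinite k] [AddCommGroup V] [Module k V]
    (r d : ℕ) (hV : Module.finrank k V = r + 1)
    (W U : Fin (d + 2) → Submodule k V)
    (hWmono : Antitone W) (hUmono : Antitone U)
    (hW0 : W 0 = ⊤) (hWlast : W (Fin.last (d + 1)) = ⊥)
    (hU0 : U 0 = ⊤) (hUlast : U (Fin.last (d + 1)) = ⊥)
    (hWdrop : ∀ i : Fin (d + 1),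
      Module.finrank k (W i.castSucc) ≤ Module.finrank k (W i.succ) + 1)
    (hUdrop : ∀ i : Fin (d + 1),
      Module.finrank k (U i.castSucc) ≤ Module.finrank k (U i.succ) + 1)
    (a b : Fin (r + 1) → Fin (d + 1))
    (ha : StrictMono a) (hb : StrictMono b)
    (haW : {i : Fin (d + 1) | ∃ s : V, s ≠ 0 ∧ s ∈ W i.castSucc ∧ s ∉ W i.succ}
      = Set.range a)
    (hbU : {i : Fin (d + 1) | ∃ s : V, s ≠ 0 ∧ s ∈ U i.castSucc ∧ s ∉ U i.succ}
      = Set.range b) :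
    ∃ (s : Module.Basis (Fin (r + 1)) k V) (σ : Equiv.Perm (Fin (r + 1))),
      ∀ i : Fin (r + 1),
        (s i ∈ W (a i).castSucc ∧ s i ∉ W (a i).succ) ∧
        (s i ∈ U (b (σ i)).castSucc ∧ s i ∉ U (b (σ i)).succ) :=
  stmt_6_general r d hV W U hWmono hUmono hW0 hWlast hU0 hUlast hWdrop hUdrop a b haW hbU
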